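/- arXiv:2602.20504 — 2 statements merged into one kernel-verified Lean document; each statement's English description precedes it below -/
import Mathlib

section
/- Let G = (V,E) be a finite simple connected graph of order n ≥ 2. Then the vertex cover number of the splitting graph S(G) equals n − β₀*(G), i.e., α₀(S(G)) = n − β₀*(G). -/
/-- A finset `S` is independent in `G` if no two of its vertices are adjacent. -/
def IsIndepFinset {V : Type*} (G : SimpleGraph V) (S : Finset V) : Prop :=
  ∀ u ∈ S, ∀ v ∈ S, ¬ G.Adj u v

open Classical in
/-- The neighborhood `N(S)` of a finset `S` in `G`: all vertices adjacent to some vertex of `S`. -/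
noncomputable def nbhdSet {V : Type*} [Fintype V] (G : SimpleGraph V) (S : Finset V) : Finset V :=
  Finset.univ.filter fun v => ∃ u ∈ S, G.Adj u v

/-- The independence number `β₀(G)`: maximum size of an independent set. -/
noncomputable def indepNum {V : Type*} [Fintype V] (G : SimpleGraph V) : ℕ :=
  sSup {k : ℕ | ∃ S : Finset V, IsIndepFinset G S ∧ S.card = k}

/-- A finset `C` is a vertex cover of `G` if it meets every edge. -/
def IsVertexCover {V : Type*} (G : SimpleGraph V) (C : Finset V) : Prop :=
  ∀ u v, G.Adj u v → u ∈ C ∨ v ∈ C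

/-- The vertex cover number `α₀(G)`: minimum size of a vertex cover. -/
noncomputable def coverNum {V : Type*} [Fintype V] (G : SimpleGraph V) : ℕ :=
  sInf {k : ℕ | ∃ C : Finset V, IsVertexCover G C ∧ C.card = k}

/-- `β₀*(G) = max {|S| - |N(S)| : S independent in G}`. -/
noncomputable def betaStar {V : Type*} [Fintype V] (G : SimpleGraph V) : ℤ :=
  sSup {k : ℤ | ∃ S : Finset V,
    IsIndepFinset G S ∧ k = (S.card : ℤ) - ((nbhdSet G S).card : ℤ)}

/-- The splitting graph `S(G)`: vertex set `V ⊔ V'`, with the edges of `G` together with an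
edge between the copy `v'` of `v` and `u` for every edge `vu` of `G`. -/
def splittingGraph {V : Type*} (G : SimpleGraph V) : SimpleGraph (V ⊕ V) where
  Adj x y :=
    match x, y with
    | Sum.inl a, Sum.inl b => G.Adj a b
    | Sum.inl a, Sum.inr b => G.Adj a b
    | Sum.inr a, Sum.inl b => G.Adj a b
    | Sum.inr _, Sum.inr _ => False
  symm := by
    constructor
    rintro (a | a) (b | b) h
    · exact G.symm.symm _ _ h
    · exact G.symm.symm _ _ h
    · exact G.symm.symm _ _ h
    · exact h
  loopless := by
    constructor
    rintro (a | a) h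
    · exact G.loopless.irrefl a h
    · exact h

/-!
A vertex cover `C` of `S(G)` splits into its part `L ⊆ V` and its part `R ⊆ V'`. Every edge of `G`
is an edge of `S(G)`, so `A = V \ L` is independent in `G`; and for `u ∈ A` adjacent to `v`, the
edge `u v'` forces `v' ∈ R`, so `N(A) ⊆ R`. Hence `|C| = n - |A| + |R| ≥ n - (|A| - |N(A)|)`.
Conversely, for `S` independent, `(V \ S) ∪ N(S)'` is a cover of size `n - (|S| - |N(S)|)`.
-/

section

variable {V : Type*} [Fintype V]

theorem mem_nbhdSet {G : SimpleGraph V} {S : Finset V} {v : V} :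
    v ∈ nbhdSet G S ↔ ∃ u ∈ S, G.Adj u v := by
  simp [nbhdSet]

theorem coverNum_le {H : SimpleGraph V} {C : Finset V} (hC : IsVertexCover H C) :
    coverNum H ≤ C.card :=
  Nat.sInf_le ⟨C, hC, rfl⟩

theorem exists_isVertexCover_card_eq_coverNum (H : SimpleGraph V) :
    ∃ C : Finset V, IsVertexCover H C ∧ C.card = coverNum H :=
  Nat.sInf_mem (s := {k : ℕ | ∃ C : Finset V, IsVertexCover H C ∧ C.card = k})
    ⟨_, Finset.univ, fun u _ _ => Or.inl (Finset.mem_univ u), rfl⟩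

theorem betaStar_set_finite (G : SimpleGraph V) :
    {k : ℤ | ∃ S : Finset V,
      IsIndepFinset G S ∧ k = (S.card : ℤ) - ((nbhdSet G S).card : ℤ)}.Finite :=
  (Set.finite_range fun S : Finset V => (S.card : ℤ) - (nbhdSet G S).card).subset <| by
    rintro _ ⟨S, -, rfl⟩
    exact ⟨S, rfl⟩

theorem le_betaStar {G : SimpleGraph V} {S : Finset V} (hS : IsIndepFinset G S) :
    (S.card : ℤ) - (nbhdSet G S).card ≤ betaStar G :=
  le_csSup (betaStar_set_finite G).bddAbove ⟨S, hS, rfl⟩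

theorem exists_isIndepFinset_betaStar_eq (G : SimpleGraph V) :
    ∃ S : Finset V, IsIndepFinset G S ∧ betaStar G = (S.card : ℤ) - (nbhdSet G S).card :=
  Set.Nonempty.csSup_mem (s := {k : ℤ | ∃ S : Finset V,
      IsIndepFinset G S ∧ k = (S.card : ℤ) - ((nbhdSet G S).card : ℤ)})
    ⟨0, ∅, by simp [IsIndepFinset], by simp [nbhdSet]⟩ (betaStar_set_finite G)

variable [DecidableEq V] {G : SimpleGraph V}

theorem isVertexCover_splittingGraph_compl_disjSum_nbhdSet {S : Finset V}
    (hS : IsIndepFinset G S) :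
    IsVertexCover (splittingGraph G) (Sᶜ.disjSum (nbhdSet G S)) := by
  rintro (u | u) (v | v) hadj <;>
    simp only [Finset.inl_mem_disjSum, Finset.inr_mem_disjSum, Finset.mem_compl, mem_nbhdSet]
  · by_contra! h
    exact hS u h.1 v h.2 hadj
  · by_cases hu : u ∈ S
    · exact Or.inr ⟨u, hu, hadj⟩
    · exact Or.inl hu
  · by_cases hv : v ∈ S
    · exact Or.inl ⟨v, hv, G.adj_symm hadj⟩
    · exact Or.inr hv
  · exact hadj.elim

theorem coverNum_splittingGraph_le_card_sub_betaStar :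
    (coverNum (splittingGraph G) : ℤ) ≤ Fintype.card V - betaStar G := by
  obtain ⟨S, hS, hβ⟩ := exists_isIndepFinset_betaStar_eq G
  have hle := coverNum_le (isVertexCover_splittingGraph_compl_disjSum_nbhdSet hS)
  rw [Finset.card_disjSum] at hle
  have hcompl := S.card_add_card_compl
  omega

theorem isIndepFinset_compl_toLeft {C : Finset (V ⊕ V)}
    (hC : IsVertexCover (splittingGraph G) C) : IsIndepFinset G C.toLeftᶜ := by
  intro u hu v hv hadj
  rw [Finset.mem_compl, Finset.mem_toLeft] at hu hv
  exact (hC (Sum.inl u) (Sum.inl v) hadj).elim hu hv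

theorem nbhdSet_compl_toLeft_subset_toRight {C : Finset (V ⊕ V)}
    (hC : IsVertexCover (splittingGraph G) C) : nbhdSet G C.toLeftᶜ ⊆ C.toRight := by
  intro v hv
  obtain ⟨u, hu, hadj⟩ := mem_nbhdSet.1 hv
  rw [Finset.mem_compl, Finset.mem_toLeft] at hu
  exact Finset.mem_toRight.2 ((hC (Sum.inl u) (Sum.inr v) hadj).resolve_left hu)

theorem card_sub_betaStar_le_card_of_isVertexCover {C : Finset (V ⊕ V)}
    (hC : IsVertexCover (splittingGraph G) C) :
    (Fintype.card V : ℤ) - betaStar G ≤ C.card := by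
  have hβ := le_betaStar (isIndepFinset_compl_toLeft hC)
  have hN := Finset.card_le_card (nbhdSet_compl_toLeft_subset_toRight hC)
  have hsplit := C.card_toLeft_add_card_toRight
  have hcompl := C.toLeft.card_add_card_compl
  omega

end

theorem stmt2_general {V : Type*} [Fintype V] (G : SimpleGraph V) :
    (coverNum (splittingGraph G) : ℤ) = (Fintype.card V : ℤ) - betaStar G := by
  classical
  obtain ⟨C, hC, hcard⟩ := exists_isVertexCover_card_eq_coverNum (splittingGraph G)
  refine le_antisymm coverNum_splittingGraph_le_card_sub_betaStar ?_
  rw [← hcard]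
  exact card_sub_betaStar_le_card_of_isVertexCover hC

theorem stmt2 {V : Type*} [Fintype V] (G : SimpleGraph V)
    (hconn : G.Connected) (hn : 2 ≤ Fintype.card V) :
    (coverNum (splittingGraph G) : ℤ) = (Fintype.card V : ℤ) - betaStar G :=
  stmt2_general G
end

section
/- Let G = (V,E) be a finite simple connected graph of order n ≥ 2. Then n ≤ β₀(S(G)) ≤ 2n − 2. -/
/-!
The copies `V'` form an independent set of size `n` in `S(G)`. Conversely, `G` has an edge `uv`
since it is connected with `n ≥ 2`, and then `uv'` and `vu'` are disjoint edges of `S(G)`; an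
independent set misses a vertex of each of them, hence at least two of the `2n` vertices.
-/

section IndepFinset

variable {α : Type*} {H : SimpleGraph α} {S : Finset α}

lemma IsIndepFinset.notMem_or_notMem_of_adj (hS : IsIndepFinset H S) {a b : α}
    (hab : H.Adj a b) : a ∉ S ∨ b ∉ S := by
  by_contra! h
  exact hS a h.1 b h.2 hab

variable [Fintype α]

lemma le_indepNum (hS : IsIndepFinset H S) : S.card ≤ indepNum H :=
  le_csSup ⟨Fintype.card α, by rintro _ ⟨T, -, rfl⟩; exact T.card_le_univ⟩ ⟨S, hS, rfl⟩

lemma indepNum_le {k : ℕ} (h : ∀ S, IsIndepFinset H S → S.card ≤ k) : indepNum H ≤ k :=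
  csSup_le' <| by rintro _ ⟨S, hS, rfl⟩; exact h S hS

lemma Finset.card_le_card_sub_two_of_notMem {x y : α} (hxy : x ≠ y) (hx : x ∉ S) (hy : y ∉ S) :
    S.card ≤ Fintype.card α - 2 := by
  classical
  have h2 : 2 ≤ Sᶜ.card := by
    calc 2 = ({x, y} : Finset α).card := (Finset.card_pair hxy).symm
      _ ≤ Sᶜ.card := Finset.card_le_card <| by simp [Finset.insert_subset_iff, hx, hy]
  have := S.card_le_univ
  rw [Finset.card_compl] at h2
  omega

lemma IsIndepFinset.card_le_of_adj_of_adj (hS : IsIndepFinset H S) {a b c d : α}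
    (hab : H.Adj a b) (hcd : H.Adj c d) (hac : a ≠ c) (had : a ≠ d) (hbc : b ≠ c) (hbd : b ≠ d) :
    S.card ≤ Fintype.card α - 2 := by
  obtain ⟨x, hx, hxS⟩ : ∃ x, (x = a ∨ x = b) ∧ x ∉ S := by
    rcases hS.notMem_or_notMem_of_adj hab with h | h <;> exact ⟨_, by simp, h⟩
  obtain ⟨y, hy, hyS⟩ : ∃ y, (y = c ∨ y = d) ∧ y ∉ S := by
    rcases hS.notMem_or_notMem_of_adj hcd with h | h <;> exact ⟨_, by simp, h⟩
  refine Finset.card_le_card_sub_two_of_notMem ?_ hxS hyS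
  rcases hx with rfl | rfl <;> rcases hy with rfl | rfl <;> assumption

end IndepFinset

section splittingGraph

variable {V : Type*} [Fintype V] {G : SimpleGraph V}

lemma isIndepFinset_splittingGraph_map_inr :
    IsIndepFinset (splittingGraph G) (Finset.univ.map .inr) := by
  simp only [IsIndepFinset, Finset.mem_map, Finset.mem_univ, true_and]
  rintro _ ⟨u, rfl⟩ _ ⟨v, rfl⟩
  exact id

lemma card_le_indepNum_splittingGraph : Fintype.card V ≤ indepNum (splittingGraph G) := by
  simpa using le_indepNum (isIndepFinset_splittingGraph_map_inr (G := G))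

lemma indepNum_splittingGraph_le_of_adj {u v : V} (huv : G.Adj u v) :
    indepNum (splittingGraph G) ≤ 2 * Fintype.card V - 2 := by
  refine indepNum_le fun S hS => ?_
  have hcard : Fintype.card (V ⊕ V) = 2 * Fintype.card V := by
    rw [Fintype.card_sum, two_mul]
  rw [← hcard]
  exact hS.card_le_of_adj_of_adj (a := .inl u) (b := .inr v) (c := .inl v) (d := .inr u)
    huv huv.symm (by simp [huv.ne]) (by simp) (by simp) (by simp [huv.ne.symm])

end splittingGraph

theorem stmt5 {V : Type*} [Fintype V] (G : SimpleGraph V)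
    (hconn : G.Connected) (hn : 2 ≤ Fintype.card V) :
    Fintype.card V ≤ indepNum (splittingGraph G) ∧
      indepNum (splittingGraph G) ≤ 2 * Fintype.card V - 2 := by
  have : Nontrivial V := Fintype.one_lt_card_iff_nontrivial.mp hn
  obtain ⟨u, hu⟩ := hconn.preconnected.exists_adj_of_nontrivial (Classical.arbitrary V)
  exact ⟨card_le_indepNum_splittingGraph, indepNum_splittingGraph_le_of_adj hu⟩
end
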